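/- arXiv:2603.00783 — 3 statements merged into one kernel-verified Lean document; each statement's English description precedes it below -/
import Mathlib

section
/- A continuous map α: |T₁| → |T₂| between merge trees satisfying (S1), (S2'), and (S3) also satisfies (S2); hence conditions (S1)+(S2)+(S3) and (S1)+(S2')+(S3) define the same class of ε-good maps. -/
/-- An abstract merge tree: a set of points with an ancestor relation `le`
(`le u v` means `v` is `u` or an ancestor of `u`), a height function `f`
strictly increasing towards the root, nearest common ancestors `nca`,
and for every point `u` and `δ ≥ 0` the unique ancestor `up u δ` of `u`
at height `f u + δ`. -/
structure MergeTree where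
  X : Type
  le : X → X → Prop
  le_refl : ∀ u, le u u
  le_trans : ∀ u v w, le u v → le v w → le u w
  le_antisymm : ∀ u v, le u v → le v u → u = v
  f : X → ℝ
  f_strictMono : ∀ u v, le u v → u ≠ v → f u < f v
  nca : X → X → X
  le_nca_left : ∀ u v, le u (nca u v)
  le_nca_right : ∀ u v, le v (nca u v)
  nca_min : ∀ u v w, le u w → le v w → le (nca u v) w
  up : X → ℝ → X
  le_up : ∀ u δ, 0 ≤ δ → le u (up u δ)
  f_up : ∀ u δ, 0 ≤ δ → f (up u δ) = f u + δ
  up_unique : ∀ u δ v, 0 ≤ δ → le u v → f v = f u + δ → v = up u δ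

namespace MergeTree

/-- The path metric `d_T(u,p) = f(NCA(u,p)) − min{f u, f p}` on a merge tree. -/
noncomputable def dist (T : MergeTree) (u p : T.X) : ℝ :=
  T.f (T.nca u p) - min (T.f u) (T.f p)

end MergeTree

/-- Continuity of a map between merge trees with respect to the tree metrics. -/
def TreeContinuous (T₁ T₂ : MergeTree) (α : T₁.X → T₂.X) : Prop :=
  ∀ u : T₁.X, ∀ R : ℝ, 0 < R → ∃ r : ℝ, 0 < r ∧
    ∀ p : T₁.X, T₁.dist u p < r → T₂.dist (α u) (α p) < R

/-- A pair of ε-interleaved (compatible continuous) maps between merge trees: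
(C1) g(α u) = f u + ε, (C2) β(α u) = u^{2ε}, (C3) f(β w) = g w + ε,
(C4) α(β w) = w^{2ε}. -/
def Interleaved (T₁ T₂ : MergeTree) (α : T₁.X → T₂.X) (β : T₂.X → T₁.X)
    (ε : ℝ) : Prop :=
  0 ≤ ε ∧ TreeContinuous T₁ T₂ α ∧ TreeContinuous T₂ T₁ β ∧
  (∀ u, T₂.f (α u) = T₁.f u + ε) ∧
  (∀ u, β (α u) = T₁.up u (2 * ε)) ∧
  (∀ w, T₁.f (β w) = T₂.f w + ε) ∧
  (∀ w, α (β w) = T₂.up w (2 * ε))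

/-- The interleaving distance between merge trees: the infimum of all ε ≥ 0
admitting a pair of ε-interleaved maps. -/
noncomputable def dID (T₁ T₂ : MergeTree) : ℝ :=
  sInf {ε : ℝ | ∃ α β, Interleaved T₁ T₂ α β ε}

/-- An ε-good map `α`, with `wA w` the nearest ancestor of `w` in `Img α`:
(S1) g(α u) = f u + ε; (S2) α u₁ ⪯ α u₂ → u₁^{2ε} ⪯ u₂^{2ε};
(S3) for w ∉ Img α, g(wA w) − g w ≤ 2ε. -/
def GoodMap (T₁ T₂ : MergeTree) (α : T₁.X → T₂.X) (wA : T₂.X → T₂.X)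
    (ε : ℝ) : Prop :=
  0 ≤ ε ∧ TreeContinuous T₁ T₂ α ∧
  (∀ u, T₂.f (α u) = T₁.f u + ε) ∧
  (∀ u₁ u₂, T₂.le (α u₁) (α u₂) → T₁.le (T₁.up u₁ (2 * ε)) (T₁.up u₂ (2 * ε))) ∧
  (∀ w, w ∉ Set.range α →
    T₂.le w (wA w) ∧ wA w ∈ Set.range α ∧
    (∀ w', T₂.le w w' → w' ∈ Set.range α → T₂.le (wA w) w') ∧
    T₂.f (wA w) - T₂.f w ≤ 2 * ε)

namespace MergeTree

lemma f_mono (T : MergeTree) {u v : T.X} (h : T.le u v) : T.f u ≤ T.f v := by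
  rcases eq_or_ne u v with rfl | hne
  · exact le_rfl
  · exact (T.f_strictMono u v h hne).le

lemma up_zero (T : MergeTree) (u : T.X) : T.up u 0 = u :=
  (T.up_unique u 0 u le_rfl (T.le_refl u) (by ring)).symm

lemma eq_of_le_of_f_le (T : MergeTree) {u v : T.X} (h : T.le u v)
    (hf : T.f v ≤ T.f u) : u = v := by
  by_contra hne
  exact absurd hf (not_le.mpr (T.f_strictMono u v h hne))

/-- Two ancestors of a common point are comparable (ordered by height). -/
lemma anc_comp (T : MergeTree) {u a b : T.X} (ha : T.le u a) (hb : T.le u b)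
    (h : T.f a ≤ T.f b) : T.le a b := by
  have hua := T.f_mono ha
  have hub := T.f_mono hb
  have h1 : (0:ℝ) ≤ T.f b - T.f a := by linarith
  have h2 : (0:ℝ) ≤ T.f b - T.f u := by linarith
  have hc : T.le a (T.up a (T.f b - T.f a)) := T.le_up a _ h1
  have hfc : T.f (T.up a (T.f b - T.f a)) = T.f a + (T.f b - T.f a) := T.f_up a _ h1
  have e1 : T.up a (T.f b - T.f a) = T.up u (T.f b - T.f u) :=
    T.up_unique u _ _ h2 (T.le_trans u a _ ha hc) (by rw [hfc]; ring)
  have e2 : b = T.up u (T.f b - T.f u) :=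
    T.up_unique u _ b h2 hb (by ring)
  rw [e2, ← e1]
  exact hc

lemma nca_left_of_le (T : MergeTree) {u p : T.X} (h : T.le u p) : T.nca u p = p :=
  T.le_antisymm _ _ (T.nca_min u p p h (T.le_refl p)) (T.le_nca_right u p)

lemma nca_right_of_le (T : MergeTree) {u p : T.X} (h : T.le p u) : T.nca u p = u :=
  T.le_antisymm _ _ (T.nca_min u p u (T.le_refl u) h) (T.le_nca_left u p)

lemma dist_of_le_left (T : MergeTree) {u p : T.X} (h : T.le u p) :
    T.dist u p = T.f p - T.f u := by
  unfold MergeTree.dist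
  rw [T.nca_left_of_le h, min_eq_left (T.f_mono h)]

lemma dist_of_le_right (T : MergeTree) {u p : T.X} (h : T.le p u) :
    T.dist u p = T.f u - T.f p := by
  unfold MergeTree.dist
  rw [T.nca_right_of_le h, min_eq_right (T.f_mono h)]

lemma up_mono (T : MergeTree) (u : T.X) {s t : ℝ} (hs : 0 ≤ s) (hst : s ≤ t) :
    T.le (T.up u s) (T.up u t) := by
  have ht : 0 ≤ t := hs.trans hst
  exact T.anc_comp (T.le_up u s hs) (T.le_up u t ht)
    (by rw [T.f_up u s hs, T.f_up u t ht]; linarith)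

lemma up_up (T : MergeTree) (u : T.X) {s t : ℝ} (hs : 0 ≤ s) (ht : 0 ≤ t) :
    T.up (T.up u s) t = T.up u (s + t) :=
  T.up_unique u (s + t) _ (by linarith)
    (T.le_trans _ _ _ (T.le_up u s hs) (T.le_up _ t ht))
    (by rw [T.f_up _ t ht, T.f_up u s hs]; ring)

end MergeTree

/-- A continuous map α satisfying (S1), (S2') and (S3) also
satisfies (S2); hence (S1)+(S2)+(S3) and (S1)+(S2')+(S3) define the same
class of ε-good maps. -/
theorem stmt3 (T₁ T₂ : MergeTree) (ε : ℝ) (hε : 0 ≤ ε) (α : T₁.X → T₂.X)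
    (wA : T₂.X → T₂.X)
    (hcont : TreeContinuous T₁ T₂ α)
    (hS1 : ∀ u, T₂.f (α u) = T₁.f u + ε)
    (hS2' : ∀ u₁ u₂, α u₁ = α u₂ → T₁.up u₁ (2 * ε) = T₁.up u₂ (2 * ε))
    (hS3 : ∀ w, w ∉ Set.range α →
      T₂.le w (wA w) ∧ wA w ∈ Set.range α ∧
      (∀ w', T₂.le w w' → w' ∈ Set.range α → T₂.le (wA w) w') ∧
      T₂.f (wA w) - T₂.f w ≤ 2 * ε) :
    ∀ u₁ u₂, T₂.le (α u₁) (α u₂) →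
      T₁.le (T₁.up u₁ (2 * ε)) (T₁.up u₂ (2 * ε)) := by
  intro u₁ u₂ hle
  have hg1 : T₂.f (α u₁) = T₁.f u₁ + ε := hS1 u₁
  have hg2 : T₂.f (α u₂) = T₁.f u₂ + ε := hS1 u₂
  have hf12 : T₁.f u₁ ≤ T₁.f u₂ := by
    have := T₂.f_mono hle
    linarith
  set δ : ℝ := T₁.f u₂ - T₁.f u₁ with hδdef
  have hδ : 0 ≤ δ := by rw [hδdef]; linarith
  set S : Set ℝ := {t | 0 ≤ t ∧ t ≤ δ ∧ T₂.le (α (T₁.up u₁ t)) (α u₂)} with hSdef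
  have h0S : (0:ℝ) ∈ S := ⟨le_rfl, hδ, by rw [T₁.up_zero]; exact hle⟩
  have hne : S.Nonempty := ⟨0, h0S⟩
  have hbdd : BddAbove S := ⟨δ, fun x hx => hx.2.1⟩
  set t0 : ℝ := sSup S with ht0def
  have ht0l : 0 ≤ t0 := le_csSup hbdd h0S
  have ht0r : t0 ≤ δ := csSup_le hne fun x hx => hx.2.1
  have hga : T₂.f (α (T₁.up u₁ t0)) = T₁.f u₁ + t0 + ε := by
    rw [hS1, T₁.f_up u₁ t0 ht0l]
  -- Claim 1: the point of the path at the supremum still lies below α u₂.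
  have claim1 : T₂.le (α (T₁.up u₁ t0)) (α u₂) := by
    have hwn : T₂.le (α u₂) (T₂.nca (α (T₁.up u₁ t0)) (α u₂)) :=
      T₂.le_nca_right _ _
    have han : T₂.le (α (T₁.up u₁ t0)) (T₂.nca (α (T₁.up u₁ t0)) (α u₂)) :=
      T₂.le_nca_left _ _
    have hfn : T₂.f (T₂.nca (α (T₁.up u₁ t0)) (α u₂)) ≤ T₂.f (α u₂) := by
      by_contra hgt
      push_neg at hgt
      obtain ⟨r, hr, hcr⟩ := hcont (T₁.up u₁ t0)
        (T₂.f (T₂.nca (α (T₁.up u₁ t0)) (α u₂)) - T₂.f (α u₂)) (by linarith)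
      obtain ⟨s, hsS, hst⟩ := exists_lt_of_lt_csSup hne
        (show t0 - r < sSup S by rw [← ht0def]; linarith)
      have hs0 : 0 ≤ s := hsS.1
      have hsle : s ≤ t0 := le_csSup hbdd hsS
      have hbw : T₂.le (α (T₁.up u₁ s)) (α u₂) := hsS.2.2
      have hdist1 : T₁.dist (T₁.up u₁ t0) (T₁.up u₁ s) < r := by
        rw [T₁.dist_of_le_right (T₁.up_mono u₁ hs0 hsle),
          T₁.f_up u₁ t0 ht0l, T₁.f_up u₁ s hs0]
        linarith
      have hdist2 := hcr _ hdist1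
      have hgb : T₂.f (α (T₁.up u₁ s)) = T₁.f u₁ + s + ε := by
        rw [hS1, T₁.f_up u₁ s hs0]
      have ham : T₂.le (α (T₁.up u₁ t0))
          (T₂.nca (α (T₁.up u₁ t0)) (α (T₁.up u₁ s))) := T₂.le_nca_left _ _
      have hbm : T₂.le (α (T₁.up u₁ s))
          (T₂.nca (α (T₁.up u₁ t0)) (α (T₁.up u₁ s))) := T₂.le_nca_right _ _
      have hglt : T₂.f (T₂.nca (α (T₁.up u₁ t0)) (α (T₁.up u₁ s)))
          - T₂.f (α (T₁.up u₁ s))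
          < T₂.f (T₂.nca (α (T₁.up u₁ t0)) (α u₂)) - T₂.f (α u₂) := by
        have hmin : min (T₂.f (α (T₁.up u₁ t0))) (T₂.f (α (T₁.up u₁ s)))
            = T₂.f (α (T₁.up u₁ s)) := min_eq_right (by rw [hga, hgb]; linarith)
        have hd : T₂.dist (α (T₁.up u₁ t0)) (α (T₁.up u₁ s))
            = T₂.f (T₂.nca (α (T₁.up u₁ t0)) (α (T₁.up u₁ s)))
              - T₂.f (α (T₁.up u₁ s)) := by
          unfold MergeTree.dist
          rw [hmin]
        rw [hd] at hdist2
        linarith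
      rcases le_or_gt (T₂.f (T₂.nca (α (T₁.up u₁ t0)) (α (T₁.up u₁ s))))
          (T₂.f (α u₂)) with hc | hc
      · have hmw : T₂.le (T₂.nca (α (T₁.up u₁ t0)) (α (T₁.up u₁ s))) (α u₂) :=
          T₂.anc_comp hbm hbw hc
        have hnw : T₂.le (T₂.nca (α (T₁.up u₁ t0)) (α u₂)) (α u₂) :=
          T₂.nca_min _ _ _ (T₂.le_trans _ _ _ ham hmw) (T₂.le_refl _)
        have := T₂.f_mono hnw
        linarith
      · have hwm : T₂.le (α u₂) (T₂.nca (α (T₁.up u₁ t0)) (α (T₁.up u₁ s))) :=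
          T₂.anc_comp hbw hbm hc.le
        have hnm : T₂.le (T₂.nca (α (T₁.up u₁ t0)) (α u₂))
            (T₂.nca (α (T₁.up u₁ t0)) (α (T₁.up u₁ s))) :=
          T₂.nca_min _ _ _ ham hwm
        have h1 := T₂.f_mono hnm
        linarith
    have hwe : α u₂ = T₂.nca (α (T₁.up u₁ t0)) (α u₂) :=
      T₂.eq_of_le_of_f_le hwn hfn
    rw [hwe]
    exact han
  -- Claim 2: the supremum is δ.
  have ht0δ : t0 = δ := by
    by_contra hne'
    have hlt : t0 < δ := lt_of_le_of_ne ht0r hne'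
    obtain ⟨r, hr, hcr⟩ := hcont (T₁.up u₁ t0) (δ - t0) (by linarith)
    have hst : t0 < min (t0 + r / 2) δ := lt_min (by linarith) hlt
    have hsδ : min (t0 + r / 2) δ ≤ δ := min_le_right _ _
    have hs0 : 0 ≤ min (t0 + r / 2) δ := ht0l.trans hst.le
    have hdist1 : T₁.dist (T₁.up u₁ t0) (T₁.up u₁ (min (t0 + r / 2) δ)) < r := by
      rw [T₁.dist_of_le_left (T₁.up_mono u₁ ht0l hst.le),
        T₁.f_up u₁ t0 ht0l, T₁.f_up u₁ _ hs0]
      have : min (t0 + r / 2) δ ≤ t0 + r / 2 := min_le_left _ _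
      linarith
    have hdist2 := hcr _ hdist1
    have hgb : T₂.f (α (T₁.up u₁ (min (t0 + r / 2) δ)))
        = T₁.f u₁ + min (t0 + r / 2) δ + ε := by
      rw [hS1, T₁.f_up u₁ _ hs0]
    have ham : T₂.le (α (T₁.up u₁ t0))
        (T₂.nca (α (T₁.up u₁ t0)) (α (T₁.up u₁ (min (t0 + r / 2) δ)))) :=
      T₂.le_nca_left _ _
    have hbm : T₂.le (α (T₁.up u₁ (min (t0 + r / 2) δ)))
        (T₂.nca (α (T₁.up u₁ t0)) (α (T₁.up u₁ (min (t0 + r / 2) δ)))) :=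
      T₂.le_nca_right _ _
    have hmval : T₂.f (T₂.nca (α (T₁.up u₁ t0))
        (α (T₁.up u₁ (min (t0 + r / 2) δ)))) - T₂.f (α (T₁.up u₁ t0))
        < δ - t0 := by
      have hmin : min (T₂.f (α (T₁.up u₁ t0)))
          (T₂.f (α (T₁.up u₁ (min (t0 + r / 2) δ))))
          = T₂.f (α (T₁.up u₁ t0)) := min_eq_left (by rw [hga, hgb]; linarith)
      have hd : T₂.dist (α (T₁.up u₁ t0)) (α (T₁.up u₁ (min (t0 + r / 2) δ)))
          = T₂.f (T₂.nca (α (T₁.up u₁ t0))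
            (α (T₁.up u₁ (min (t0 + r / 2) δ)))) - T₂.f (α (T₁.up u₁ t0)) := by
        unfold MergeTree.dist
        rw [hmin]
      rw [hd] at hdist2
      linarith
    have hmw : T₂.le (T₂.nca (α (T₁.up u₁ t0))
        (α (T₁.up u₁ (min (t0 + r / 2) δ)))) (α u₂) :=
      T₂.anc_comp ham claim1 (by rw [hg2]; linarith [hmval, hga, hδdef])
    have hsS : min (t0 + r / 2) δ ∈ S :=
      ⟨hs0, hsδ, T₂.le_trans _ _ _ hbm hmw⟩
    have := le_csSup hbdd hsS
    rw [← ht0def] at this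
    linarith
  -- Conclude: α (up u₁ δ) = α u₂, then use (S2').
  have hfinal : α (T₁.up u₁ δ) = α u₂ := by
    have h1 : T₂.le (α (T₁.up u₁ δ)) (α u₂) := ht0δ ▸ claim1
    exact T₂.eq_of_le_of_f_le h1
      (by rw [hg2, hS1 (T₁.up u₁ δ), T₁.f_up u₁ δ hδ]; linarith [hδdef])
  have h2 := hS2' _ _ hfinal
  have h3 : T₁.up (T₁.up u₁ δ) (2 * ε) = T₁.up u₁ (δ + 2 * ε) :=
    T₁.up_up u₁ hδ (by linarith)
  rw [← h2, h3]
  exact T₁.up_mono u₁ (by linarith) (by linarith)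
end

section
/- Let α: |T₁| → |T₂| be a continuous map between merge trees with g(α(u)) = f(u) + ε for all u. If u₁, u₂ ∈ |T₁| are incomparable (neither is an ancestor of the other) with f(u₁) < f(u₂) and f(NCA(u₁,u₂)) > f(u₂), then there exists a point u₁' on the path from u₁ to NCA(u₁, u₂) with f(u₁') = f(u₂) and α(u₁') = α(u₂) whenever α(u₁) ⪯ α(u₂) and the corresponding branches merge in T₂ at or below g(α(u₂)). -/
namespace MergeTree

/-- Two ancestors of a common point are comparable, ordered by height. -/
lemma le_of_le_le_f (T : MergeTree) {u v v' : T.X} (h : T.le u v) (h' : T.le u v')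
    (hf : T.f v ≤ T.f v') : T.le v v' := by
  have h1 : 0 ≤ T.f v - T.f u := by linarith [T.f_mono h]
  have h2 : 0 ≤ T.f v' - T.f v := by linarith
  have h3 : 0 ≤ T.f v' - T.f u := by linarith
  have hv' : v' = T.up u (T.f v' - T.f u) :=
    T.up_unique u _ v' h3 h' (by ring)
  have hv : v = T.up u (T.f v - T.f u) :=
    T.up_unique u _ v h1 h (by ring)
  have hl : T.le u (T.up v (T.f v' - T.f v)) :=
    T.le_trans u v _ h (T.le_up v _ h2)
  have h4 : T.up v (T.f v' - T.f v) = T.up u (T.f v' - T.f u) :=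
    T.up_unique u _ _ h3 hl (by rw [T.f_up v _ h2]; ring)
  rw [hv', ← h4]
  exact T.le_up v _ h2

lemma nca_of_le (T : MergeTree) {u v : T.X} (h : T.le u v) : T.nca u v = v :=
  T.le_antisymm _ _ (T.nca_min u v v h (T.le_refl v)) (T.le_nca_right u v)

lemma nca_comm (T : MergeTree) (u v : T.X) : T.nca u v = T.nca v u :=
  T.le_antisymm _ _
    (T.nca_min u v _ (T.le_nca_right v u) (T.le_nca_left v u))
    (T.nca_min v u _ (T.le_nca_right u v) (T.le_nca_left u v))

lemma dist_comm' (T : MergeTree) (u v : T.X) : T.dist u v = T.dist v u := by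
  unfold MergeTree.dist
  rw [T.nca_comm, min_comm]

lemma dist_of_le (T : MergeTree) {u v : T.X} (h : T.le u v) :
    T.dist u v = T.f v - T.f u := by
  unfold MergeTree.dist
  rw [T.nca_of_le h, min_eq_left (T.f_mono h)]

lemma dist_up_up (T : MergeTree) (u : T.X) {a b : ℝ} (ha : 0 ≤ a) (hab : a ≤ b) :
    T.dist (T.up u a) (T.up u b) = b - a := by
  have hb : 0 ≤ b := ha.trans hab
  have hl : T.le (T.up u a) (T.up u b) :=
    T.le_of_le_le_f (T.le_up u a ha) (T.le_up u b hb)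
      (by rw [T.f_up u a ha, T.f_up u b hb]; linarith)
  rw [T.dist_of_le hl, T.f_up u a ha, T.f_up u b hb]; ring

/-- Triangle-type inequality for heights of NCAs with a common point. -/
lemma tri (T : MergeTree) (x wa wb : T.X) (hba : T.f wb ≤ T.f wa) :
    T.f (T.nca x wa) ≤ T.f (T.nca x wb) + T.dist wb wa := by
  set m := T.nca wb wa with hm
  set nb := T.nca x wb with hnb
  have hwbm : T.le wb m := T.le_nca_left wb wa
  have hwam : T.le wa m := T.le_nca_right wb wa
  have hwbnb : T.le wb nb := T.le_nca_right x wb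
  have hxnb : T.le x nb := T.le_nca_left x wb
  have hdist : T.dist wb wa = T.f m - T.f wb := by
    unfold MergeTree.dist
    rw [min_eq_left hba]
  rcases le_total (T.f nb) (T.f m) with hc | hc
  · have hnbm : T.le nb m := T.le_of_le_le_f hwbnb hwbm hc
    have hxm : T.le x m := T.le_trans x nb m hxnb hnbm
    have : T.le (T.nca x wa) m := T.nca_min x wa m hxm hwam
    have h1 : T.f (T.nca x wa) ≤ T.f m := T.f_mono this
    have h2 : T.f wb ≤ T.f nb := T.f_mono hwbnb
    linarith
  · have hmnb : T.le m nb := T.le_of_le_le_f hwbm hwbnb hc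
    have hwanb : T.le wa nb := T.le_trans wa m nb hwam hmnb
    have : T.le (T.nca x wa) nb := T.nca_min x wa nb hxnb hwanb
    have h1 : T.f (T.nca x wa) ≤ T.f nb := T.f_mono this
    have h2 : T.f wb ≤ T.f m := T.f_mono hwbm
    linarith

/-- If nca(x,wa) is strictly higher than nca(x,wb) then wa is far from wb. -/
lemma lower (T : MergeTree) (x wa wb : T.X) (hba : T.f wb ≤ T.f wa)
    (h : T.f (T.nca x wb) < T.f (T.nca x wa)) :
    T.f (T.nca x wa) ≤ T.dist wb wa + T.f wb := by
  set m := T.nca wb wa with hm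
  set nb := T.nca x wb with hnb
  have hwbm : T.le wb m := T.le_nca_left wb wa
  have hwam : T.le wa m := T.le_nca_right wb wa
  have hwbnb : T.le wb nb := T.le_nca_right x wb
  have hxnb : T.le x nb := T.le_nca_left x wb
  have hdist : T.dist wb wa = T.f m - T.f wb := by
    unfold MergeTree.dist
    rw [min_eq_left hba]
  rcases le_total (T.f nb) (T.f m) with hc | hc
  · have hnbm : T.le nb m := T.le_of_le_le_f hwbnb hwbm hc
    have hxm : T.le x m := T.le_trans x nb m hxnb hnbm
    have : T.le (T.nca x wa) m := T.nca_min x wa m hxm hwam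
    have h1 : T.f (T.nca x wa) ≤ T.f m := T.f_mono this
    linarith
  · have hmnb : T.le m nb := T.le_of_le_le_f hwbm hwbnb hc
    have hwanb : T.le wa nb := T.le_trans wa m nb hwam hmnb
    have : T.le (T.nca x wa) nb := T.nca_min x wa nb hxnb hwanb
    have h1 : T.f (T.nca x wa) ≤ T.f nb := T.f_mono this
    linarith

end MergeTree

/-- Key lemma: a continuous map shifting heights by ε maps the upward path
from `u` into the upward path from `α u`. -/
lemma key_le (T₁ T₂ : MergeTree) (ε : ℝ) (α : T₁.X → T₂.X)
    (hcont : TreeContinuous T₁ T₂ α)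
    (hS1 : ∀ u, T₂.f (α u) = T₁.f u + ε)
    (u : T₁.X) (δ : ℝ) (hδ : 0 ≤ δ) :
    T₂.le (α u) (α (T₁.up u δ)) := by
  set x := α u with hx
  set w : ℝ → T₂.X := fun d => α (T₁.up u d) with hwdef
  set ψ : ℝ → ℝ := fun d => T₂.f (T₂.nca x (w d)) - T₂.f x with hψdef
  have hw : ∀ d, 0 ≤ d → T₂.f (w d) = T₂.f x + d := by
    intro d hd
    show T₂.f (α (T₁.up u d)) = T₂.f (α u) + d
    rw [hS1, hS1, T₁.f_up u d hd]; ring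
  have hψ_ge : ∀ d, 0 ≤ d → d ≤ ψ d := by
    intro d hd
    have h1 : T₂.f (w d) ≤ T₂.f (T₂.nca x (w d)) := T₂.f_mono (T₂.le_nca_right x (w d))
    have := hw d hd
    simp only [hψdef]
    linarith
  have hψ_imp : ∀ d, 0 ≤ d → ψ d ≤ d → T₂.le x (w d) := by
    intro d hd hle
    have h1 : T₂.f (w d) ≤ T₂.f (T₂.nca x (w d)) := T₂.f_mono (T₂.le_nca_right x (w d))
    have h2 : T₂.f (T₂.nca x (w d)) = T₂.f (w d) := by
      have := hw d hd
      simp only [hψdef] at hle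
      linarith
    have heq : T₂.nca x (w d) = w d := by
      by_contra hne
      have := T₂.f_strictMono _ _ (T₂.le_nca_right x (w d)) (Ne.symm hne)
      linarith
    have := T₂.le_nca_left x (w d)
    rwa [heq] at this
  by_contra hcon
  clear_value ψ
  have hψδ : δ < ψ δ := by
    rcases lt_or_ge δ (ψ δ) with h | h
    · exact h
    · exact absurd (hψ_imp δ hδ h) hcon
  obtain ⟨v, hδv, hvψ⟩ : ∃ v : ℝ, δ < v ∧ v < ψ δ :=
    ⟨(δ + ψ δ) / 2, by linarith, by linarith⟩
  set A : Set ℝ := {d : ℝ | 0 ≤ d ∧ d ≤ δ ∧ ψ d ≤ v} with hA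
  have hψ0 : ψ 0 = 0 := by
    have hu0 : T₁.up u 0 = u := (T₁.up_unique u 0 u le_rfl (T₁.le_refl u) (by ring)).symm
    have hw0 : w 0 = x := by simp only [hwdef, hu0, hx]
    have : T₂.nca x x = x :=
      T₂.le_antisymm _ _ (T₂.nca_min x x x (T₂.le_refl x) (T₂.le_refl x)) (T₂.le_nca_left x x)
    simp only [hψdef, hw0, this, sub_self]
  have h0A : (0:ℝ) ∈ A := ⟨le_rfl, hδ, by rw [hψ0]; linarith⟩
  have hAne : A.Nonempty := ⟨0, h0A⟩
  have hAbdd : BddAbove A := ⟨δ, fun d hd => hd.2.1⟩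
  set δ₀ : ℝ := sSup A with hδ₀
  have h0δ₀ : 0 ≤ δ₀ := le_csSup hAbdd h0A
  have hδ₀δ : δ₀ ≤ δ := csSup_le hAne (fun d hd => hd.2.1)
  -- ψ δ₀ ≤ v
  have hψδ₀ : ψ δ₀ ≤ v := by
    apply le_of_forall_pos_le_add
    intro η hη
    obtain ⟨r, hr, H⟩ := hcont (T₁.up u δ₀) η hη
    obtain ⟨d, hdA, hd⟩ := exists_lt_of_lt_csSup hAne (sub_lt_self δ₀ hr)
    have hdδ₀ : d ≤ δ₀ := le_csSup hAbdd hdA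
    have hd0 : 0 ≤ d := hdA.1
    have hdist1 : T₁.dist (T₁.up u δ₀) (T₁.up u d) < r := by
      rw [T₁.dist_comm', T₁.dist_up_up u hd0 hdδ₀]
      linarith
    have hdist2 : T₂.dist (w d) (w δ₀) < η := by
      rw [T₂.dist_comm']
      exact H _ hdist1
    have htri := T₂.tri x (w δ₀) (w d)
      (by rw [hw d hd0, hw δ₀ h0δ₀]; linarith)
    simp only [hψdef]
    have hψd : ψ d ≤ v := hdA.2.2
    simp only [hψdef] at hψd
    linarith
  have hδ₀lt : δ₀ < δ := by
    rcases lt_or_eq_of_le hδ₀δ with h | h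
    · exact h
    · rw [h] at hψδ₀; linarith
  -- final contradiction
  obtain ⟨r, hr, H⟩ := hcont (T₁.up u δ₀) ((v - δ) / 2) (by linarith)
  set d : ℝ := min (δ₀ + r / 2) δ with hd
  have hδ₀d : δ₀ < d := lt_min (by linarith) hδ₀lt
  have hdδ : d ≤ δ := min_le_right _ _
  have hd0 : 0 ≤ d := le_trans h0δ₀ hδ₀d.le
  have hdnA : d ∉ A := fun hmem => absurd (le_csSup hAbdd hmem) (not_le.mpr hδ₀d)
  have hψd : v < ψ d := by
    by_contra hcc
    exact hdnA ⟨hd0, hdδ, not_lt.mp hcc⟩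
  have hdist1 : T₁.dist (T₁.up u δ₀) (T₁.up u d) < r := by
    rw [T₁.dist_up_up u h0δ₀ hδ₀d.le]
    have : d ≤ δ₀ + r / 2 := min_le_left _ _
    linarith
  have hdist2 : T₂.dist (w δ₀) (w d) < (v - δ) / 2 := H _ hdist1
  have hlow := T₂.lower x (w d) (w δ₀)
    (by rw [hw d hd0, hw δ₀ h0δ₀]; linarith)
    (by simp only [hψdef] at hψδ₀ hψd; linarith)
  rw [hw δ₀ h0δ₀] at hlow
  simp only [hψdef] at hψd
  linarith

/-- Intermediate-value step. If α is continuous with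
g(α u) = f u + ε, u₁ and u₂ are incomparable with f u₁ < f u₂ <
f(NCA(u₁,u₂)), α u₁ ⪯ α u₂, and the image branches merge at or below
g(α u₂), then there is a point u₁' on the path from u₁ to NCA(u₁,u₂) with
f u₁' = f u₂ and α u₁' = α u₂. -/
theorem stmt14 (T₁ T₂ : MergeTree) (ε : ℝ) (hε : 0 ≤ ε) (α : T₁.X → T₂.X)
    (hcont : TreeContinuous T₁ T₂ α)
    (hS1 : ∀ u, T₂.f (α u) = T₁.f u + ε)
    (u₁ u₂ : T₁.X)
    (h12 : ¬ T₁.le u₁ u₂) (h21 : ¬ T₁.le u₂ u₁)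
    (hf : T₁.f u₁ < T₁.f u₂)
    (hnca : T₁.f u₂ < T₁.f (T₁.nca u₁ u₂))
    (hle : T₂.le (α u₁) (α u₂))
    (hmerge : T₂.f (T₂.nca (α u₁) (α u₂)) ≤ T₂.f (α u₂)) :
    ∃ u₁' : T₁.X, T₁.le u₁ u₁' ∧ T₁.le u₁' (T₁.nca u₁ u₂) ∧
      T₁.f u₁' = T₁.f u₂ ∧ α u₁' = α u₂ := by
  have hΔ : 0 ≤ T₁.f u₂ - T₁.f u₁ := by linarith
  set Δ : ℝ := T₁.f u₂ - T₁.f u₁ with hΔdef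
  refine ⟨T₁.up u₁ Δ, T₁.le_up u₁ Δ hΔ, ?_, ?_, ?_⟩
  · exact T₁.le_of_le_le_f (T₁.le_up u₁ Δ hΔ) (T₁.le_nca_left u₁ u₂)
      (by rw [T₁.f_up u₁ Δ hΔ]; simp only [hΔdef]; linarith)
  · rw [T₁.f_up u₁ Δ hΔ]; simp only [hΔdef]; ring
  · have hk : T₂.le (α u₁) (α (T₁.up u₁ Δ)) := key_le T₁ T₂ ε α hcont hS1 u₁ Δ hΔ
    have h1 : α (T₁.up u₁ Δ) = T₂.up (α u₁) Δ :=
      T₂.up_unique (α u₁) Δ _ hΔ hk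
        (by rw [hS1, hS1, T₁.f_up u₁ Δ hΔ]; ring)
    have h2 : α u₂ = T₂.up (α u₁) Δ :=
      T₂.up_unique (α u₁) Δ _ hΔ hle (by rw [hS1, hS1]; simp only [hΔdef]; ring)
    rw [h1, h2]
end

section
/- In the average tree T₃, every point q not in the image of the map β = γ|_{T₁} belongs to an attached trimmed subtree T'_{2,v^A}, and satisfies |k(q^A) − k(q)| ≤ ε, where q^A is the nearest ancestor of q in Img(β). -/
/-- In the average tree T₃, every point q outside the image of
β = γ|_{T₁} belongs to an attached trimmed subtree (a subtree of T₂ \ Img α,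
trimmed so that g(v^A) − g q ≤ ε, carried into T₃ with k = g − ε/2 and root
identified with a point of Img β), and satisfies |k(q^A) − k q| ≤ ε where
q^A is the nearest ancestor of q in Img β. -/
theorem stmt17 (T₁ T₂ T₃ : MergeTree) (ε : ℝ) (hε : 0 ≤ ε)
    (β : T₁.X → T₃.X)
    (S : Set T₂.X) (attach : T₂.X → T₃.X) (root : T₂.X → T₂.X)
    (qA : T₃.X → T₃.X)
    (hcover : ∀ q : T₃.X, q ∉ Set.range β → ∃ w ∈ S, attach w = q)
    (hrootS : ∀ w ∈ S, root w ∈ S)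
    (htrim : ∀ w ∈ S, T₂.le w (root w) ∧ T₂.f (root w) - T₂.f w ≤ ε)
    (hk : ∀ w ∈ S, T₃.f (attach w) = T₂.f w - ε / 2)
    (hroot : ∀ w ∈ S, attach (root w) ∈ Set.range β)
    (hattach_le : ∀ w ∈ S, T₃.le (attach w) (attach (root w)))
    (hqA : ∀ q : T₃.X, q ∉ Set.range β →
      T₃.le q (qA q) ∧ qA q ∈ Set.range β ∧
      (∀ q', T₃.le q q' → q' ∈ Set.range β → T₃.le (qA q) q')) :
    ∀ q : T₃.X, q ∉ Set.range β →
      (∃ w ∈ S, attach w = q) ∧ |T₃.f (qA q) - T₃.f q| ≤ ε := by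

    intro q hq
    obtain ⟨w, hwS, hwq⟩ := hcover q hq
    refine ⟨⟨w, hwS, hwq⟩, ?_⟩
    obtain ⟨hle1, hmem1, hmin⟩ := hqA q hq
    have hrS := hrootS w hwS
    have hroot' := hroot w hwS
    have hle2 : T₃.le q (attach (root w)) := hwq ▸ hattach_le w hwS
    have hle3 : T₃.le (qA q) (attach (root w)) := hmin _ hle2 hroot'
    have mono : ∀ a b : T₃.X, T₃.le a b → T₃.f a ≤ T₃.f b := by
      intro a b hab
      by_cases h : a = b
      · simp [h]
      · exact le_of_lt (T₃.f_strictMono a b hab h)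
    have h1 : T₃.f q ≤ T₃.f (qA q) := mono _ _ hle1
    have h2 : T₃.f (qA q) ≤ T₃.f (attach (root w)) := mono _ _ hle3
    have hq1 : T₃.f q = T₂.f w - ε / 2 := hwq ▸ hk w hwS
    have hq2 : T₃.f (attach (root w)) = T₂.f (root w) - ε / 2 := hk _ hrS
    have htr := (htrim w hwS).2
    rw [abs_le]
    constructor <;> linarith
end
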